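/- arXiv:1904.04906 — 3 statements merged into one kernel-verified Lean document; each statement's English description precedes it below -/
import Mathlib

section
/- Let k ∈ ℕ with k ≥ 3. Let A, B ⊆ (-1,1)^k be finite sets with A ∩ B = ∅, let ε > 0, and let e : A → B be a bijection such that ‖a − e(a)‖ < ε for every a ∈ A. Then there exists a homeomorphism h : [-1,1]^k → [-1,1]^k such that ‖x − h(x)‖ < ε for every x ∈ [-1,1]^k, h extends e (h(a) = e(a) for all a ∈ A), and h restricted to the topological boundary of [-1,1]^k is the identity. -/
open Filter Topology Set

/-- The cube `[-1,1]^k` as a subset of `ℝ^k` (with the sup norm / product topology). -/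
def cubeSet (k : ℕ) : Set (Fin k → ℝ) := {x | ∀ i, x i ∈ Set.Icc (-1 : ℝ) 1}

open Metric

noncomputable section

variable {E : Type*} [NormedAddCommGroup E] [NormedSpace ℝ E]

/-- radial bump -/
def bump (p : E) (r : ℝ) (x : E) : ℝ := max 0 (1 - ‖x - p‖ / r)

/-- push map -/
def push (p v : E) (r : ℝ) (x : E) : E := x + bump p r x • v

lemma bump_nonneg (p : E) (r : ℝ) (x : E) : 0 ≤ bump p r x := le_max_left _ _

lemma bump_le_one (p : E) {r : ℝ} (hr : 0 < r) (x : E) : bump p r x ≤ 1 := by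
  have : 0 ≤ ‖x - p‖ / r := div_nonneg (norm_nonneg _) hr.le
  unfold bump
  apply max_le (by norm_num)
  linarith

lemma bump_self (p : E) {r : ℝ} (hr : 0 < r) : bump p r p = 1 := by
  simp [bump]

lemma bump_eq_zero (p : E) {r : ℝ} (hr : 0 < r) {x : E} (h : r ≤ ‖x - p‖) :
    bump p r x = 0 := by
  have : (1:ℝ) ≤ ‖x - p‖ / r := (one_le_div hr).2 h
  unfold bump
  apply max_eq_left
  linarith

lemma abs_bump_sub (p : E) {r : ℝ} (hr : 0 < r) (x y : E) :
    |bump p r x - bump p r y| ≤ ‖x - y‖ / r := by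
  have h1 : |bump p r x - bump p r y| ≤ |(1 - ‖x - p‖ / r) - (1 - ‖y - p‖ / r)| := by
    unfold bump
    simpa [max_comm] using abs_max_sub_max_le_abs (1 - ‖x - p‖ / r) (1 - ‖y - p‖ / r) 0
  have h2 : |(1 - ‖x - p‖ / r) - (1 - ‖y - p‖ / r)| = |‖y - p‖ - ‖x - p‖| / r := by
    rw [show (1 - ‖x - p‖ / r) - (1 - ‖y - p‖ / r) = (‖y - p‖ - ‖x - p‖)/r by ring,
      abs_div, abs_of_pos hr]
  have h3 : |‖y - p‖ - ‖x - p‖| ≤ ‖x - y‖ := by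
    rw [abs_sub_comm]
    simpa [norm_sub_rev] using abs_norm_sub_norm_le (x - p) (y - p)
  calc |bump p r x - bump p r y| ≤ |‖y - p‖ - ‖x - p‖| / r := by rw [← h2]; exact h1
    _ ≤ ‖x - y‖ / r := by gcongr

lemma continuous_bump (p : E) (r : ℝ) : Continuous (bump p r) := by
  exact continuous_const.max (continuous_const.sub ((continuous_id.sub continuous_const).norm.div_const r))

lemma continuous_push (p v : E) (r : ℝ) : Continuous (push p v r) :=
  continuous_id.add ((continuous_bump p r).smul continuous_const)

lemma push_dist (p v : E) (r : ℝ) (hr : 0 < r) (x : E) : ‖push p v r x - x‖ ≤ ‖v‖ := by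
  have h0 := bump_nonneg p r x
  have h1 := bump_le_one p hr x
  calc ‖push p v r x - x‖ = ‖bump p r x • v‖ := by unfold push; rw [add_sub_cancel_left]
    _ = |bump p r x| * ‖v‖ := by rw [norm_smul, Real.norm_eq_abs]
    _ ≤ 1 * ‖v‖ := by
        gcongr
        rwa [abs_of_nonneg h0]
    _ = ‖v‖ := one_mul _

lemma push_eq_self (p v : E) {r : ℝ} (hr : 0 < r) {x : E} (h : r ≤ ‖x - p‖) :
    push p v r x = x := by
  unfold push
  rw [bump_eq_zero p hr h]
  simp

lemma push_apply_center (p v : E) {r : ℝ} (hr : 0 < r) : push p v r p = p + v := by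
  unfold push
  rw [bump_self p hr]
  simp

lemma push_injective (p v : E) {r : ℝ} (hr : 0 < r) (hv : ‖v‖ < r) :
    Function.Injective (push p v r) := by
  intro x y hxy
  by_contra hne
  have hd : 0 < ‖x - y‖ := by
    rw [norm_pos_iff, sub_ne_zero]; exact hne
  have h1 : ‖x - y‖ = ‖(bump p r y - bump p r x) • v‖ := by
    have : x - y = push p v r x - push p v r y + (bump p r y - bump p r x) • v := by
      unfold push; module
    rw [this, hxy]
    simp
  have h2 : ‖(bump p r y - bump p r x) • v‖ ≤ (‖x - y‖ / r) * ‖v‖ := by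
    rw [norm_smul, Real.norm_eq_abs, abs_sub_comm]
    exact mul_le_mul_of_nonneg_right (abs_bump_sub p hr x y) (norm_nonneg v)
  have h3 : (‖x - y‖ / r) * ‖v‖ < ‖x - y‖ := by
    rw [div_mul_eq_mul_div, div_lt_iff₀ hr]
    calc ‖x - y‖ * ‖v‖ < ‖x - y‖ * r := by gcongr
      _ = ‖x - y‖ * r := rfl
  linarith [h1 ▸ (lt_of_le_of_lt h2 h3)]

lemma push_surjective [CompleteSpace E] (p v : E) {r : ℝ} (hr : 0 < r) (hv : ‖v‖ < r) :
    Function.Surjective (push p v r) := by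
  intro y
  set K : NNReal := ⟨‖v‖ / r, div_nonneg (norm_nonneg _) hr.le⟩ with hK
  have hlip : LipschitzWith K (fun x => y - bump p r x • v) := by
    apply LipschitzWith.of_dist_le_mul
    intro a b
    simp only [dist_eq_norm]
    have : (y - bump p r a • v) - (y - bump p r b • v) = (bump p r b - bump p r a) • v := by
      module
    rw [this, norm_smul, Real.norm_eq_abs]
    calc |bump p r b - bump p r a| * ‖v‖ ≤ (‖b - a‖ / r) * ‖v‖ :=
          mul_le_mul_of_nonneg_right (abs_bump_sub p hr b a) (norm_nonneg v)
      _ = (‖v‖ / r) * ‖a - b‖ := by rw [norm_sub_rev]; ring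
      _ = K * ‖a - b‖ := rfl
  have hcon : ContractingWith K (fun x => y - bump p r x • v) := by
    constructor
    · rw [← NNReal.coe_lt_coe]
      show ‖v‖ / r < (1:ℝ)
      rwa [div_lt_one hr]
    · exact hlip
  have : Nonempty E := ⟨0⟩
  obtain ⟨x, hx⟩ := hcon.exists_fixedPoint y (by simp [edist_ne_top])
  refine ⟨x, ?_⟩
  have hfix : (fun x => y - bump p r x • v) x = x := hx.1
  simp only at hfix
  unfold push
  nth_rewrite 1 [← hfix]
  abel


lemma push_mem_closedBall (p v : E) {r : ℝ} (hr : 0 < r) (hv : ‖v‖ ≤ r) {x : E}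
    (hx : x ∈ closedBall p r) : push p v r x ∈ closedBall p r := by
  rw [mem_closedBall, dist_eq_norm] at hx ⊢
  rcases le_or_gt r ‖x - p‖ with h | h
  · rw [push_eq_self p v hr h]; exact hx
  · have hb : bump p r x = 1 - ‖x - p‖ / r := by
      unfold bump
      apply max_eq_right
      have : ‖x - p‖ / r ≤ 1 := by rw [div_le_one hr]; exact h.le
      linarith
    have : ‖push p v r x - p‖ ≤ ‖x - p‖ + bump p r x * ‖v‖ := by
      calc ‖push p v r x - p‖ = ‖(x - p) + bump p r x • v‖ := by
            unfold push; rw [add_sub_right_comm]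
          _ ≤ ‖x - p‖ + ‖bump p r x • v‖ := norm_add_le _ _
          _ = ‖x - p‖ + bump p r x * ‖v‖ := by
            rw [norm_smul, Real.norm_eq_abs, abs_of_nonneg (bump_nonneg p r x)]
    rw [hb] at this
    have h2 : ‖x - p‖ + (1 - ‖x - p‖ / r) * ‖v‖ ≤ r := by
      have e1 : 0 ≤ 1 - ‖x - p‖ / r := by
        have : ‖x - p‖ / r ≤ 1 := by rw [div_le_one hr]; exact h.le
        linarith
      calc ‖x - p‖ + (1 - ‖x - p‖ / r) * ‖v‖ ≤ ‖x - p‖ + (1 - ‖x - p‖ / r) * r :=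
            by nlinarith
        _ = r := by field_simp; ring
    linarith

lemma push_mapsTo (p v : E) {r : ℝ} (hr : 0 < r) (hv : ‖v‖ ≤ r) {T : Set E}
    (hsub : closedBall p r ⊆ T) : MapsTo (push p v r) T T := by
  intro x hx
  rcases le_or_gt r ‖x - p‖ with h | h
  · rw [push_eq_self p v hr h]; exact hx
  · exact hsub (push_mem_closedBall p v hr hv (by rw [mem_closedBall, dist_eq_norm]; exact h.le))

lemma push_eq_self_of_not_mem (p v : E) {r : ℝ} (hr : 0 < r) {T : Set E}
    (hsub : closedBall p r ⊆ T) {x : E} (hx : x ∉ T) : push p v r x = x := by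
  apply push_eq_self p v hr
  by_contra h
  push_neg at h
  exact hx (hsub (by rw [mem_closedBall, dist_eq_norm]; exact h.le))

/-- chain of pushes along an arithmetic progression of centers -/
def segChain (p v : E) (r : ℝ) : ℕ → E → E
  | 0 => id
  | (t+1) => push (p + t • v) v r ∘ segChain p v r t

lemma continuous_segChain (p v : E) (r : ℝ) (t : ℕ) : Continuous (segChain p v r t) := by
  induction t with
  | zero => exact continuous_id
  | succ t ih => exact (continuous_push _ _ _).comp ih

lemma segChain_bijective [CompleteSpace E] (p v : E) {r : ℝ} (hr : 0 < r) (hv : ‖v‖ < r)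
    (t : ℕ) : Function.Bijective (segChain p v r t) := by
  induction t with
  | zero => exact Function.bijective_id
  | succ t ih =>
      exact Function.Bijective.comp ⟨push_injective _ _ hr hv, push_surjective _ _ hr hv⟩ ih

lemma segChain_apply_base (p v : E) {r : ℝ} (hr : 0 < r) (hv : ‖v‖ < r) (t : ℕ) :
    segChain p v r t p = p + t • v := by
  induction t with
  | zero => simp [segChain]
  | succ t ih =>
      show push (p + t • v) v r (segChain p v r t p) = p + (t+1) • v
      rw [ih, push_apply_center _ _ hr, succ_nsmul, add_assoc]

lemma segChain_dist (p v : E) {r : ℝ} (hr : 0 < r) (t : ℕ) (x : E) :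
    ‖segChain p v r t x - x‖ ≤ t * ‖v‖ := by
  induction t with
  | zero => simp [segChain]
  | succ t ih =>
      show ‖push (p + t • v) v r (segChain p v r t x) - x‖ ≤ (t+1 : ℕ) * ‖v‖
      calc ‖push (p + t • v) v r (segChain p v r t x) - x‖
          ≤ ‖push (p + t • v) v r (segChain p v r t x) - segChain p v r t x‖
            + ‖segChain p v r t x - x‖ := by
            have := norm_add_le (push (p + t • v) v r (segChain p v r t x) - segChain p v r t x)
              (segChain p v r t x - x)
            simpa using this
        _ ≤ ‖v‖ + t * ‖v‖ := add_le_add (push_dist _ _ _ hr _) ih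
        _ = (t+1 : ℕ) * ‖v‖ := by push_cast; ring

lemma segChain_eq_self (p v : E) {r : ℝ} (hr : 0 < r) {T : Set E} {M : ℕ}
    (hT : ∀ t < M, closedBall (p + t • v) r ⊆ T) {t : ℕ} (ht : t ≤ M) {x : E} (hx : x ∉ T) :
    segChain p v r t x = x := by
  induction t with
  | zero => rfl
  | succ t ih =>
      show push (p + t • v) v r (segChain p v r t x) = x
      rw [ih (le_of_lt (Nat.lt_of_succ_le ht))]
      exact push_eq_self_of_not_mem _ _ hr (hT t (Nat.lt_of_succ_le ht)) hx

lemma segChain_mapsTo (p v : E) {r : ℝ} (hr : 0 < r) (hv : ‖v‖ ≤ r) {T : Set E} {M : ℕ}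
    (hT : ∀ t < M, closedBall (p + t • v) r ⊆ T) {t : ℕ} (ht : t ≤ M) :
    MapsTo (segChain p v r t) T T := by
  induction t with
  | zero => exact mapsTo_id T
  | succ t ih =>
      exact (push_mapsTo _ _ hr hv (hT t (Nat.lt_of_succ_le ht))).comp
        (ih (le_of_lt (Nat.lt_of_succ_le ht)))


section SegMap

variable (p q : E) (M : ℕ) (r : ℝ)

/-- push from `p` to `q` along the segment, in `M` steps, each within radius `r` -/
def segMap : E → E := segChain p ((M:ℝ)⁻¹ • (q - p)) r M

variable {p q M r}

lemma segMap_norm_v (hM : 0 < M) : ‖(M:ℝ)⁻¹ • (q - p)‖ = ‖q - p‖ / M := by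
  rw [norm_smul, Real.norm_eq_abs, abs_inv, Nat.abs_cast, div_eq_inv_mul]

lemma segMap_hv (hM : 0 < M) (hstep : ‖q - p‖ < M * r) : ‖(M:ℝ)⁻¹ • (q - p)‖ < r := by
  rw [segMap_norm_v hM, div_lt_iff₀ (by exact_mod_cast hM)]
  linarith [hstep]

lemma segMap_center_mem (hM : 0 < M) {t : ℕ} (ht : t ≤ M) :
    p + t • ((M:ℝ)⁻¹ • (q - p)) ∈ segment ℝ p q := by
  rw [segment_eq_image']
  refine ⟨(t : ℝ) / M, ⟨by positivity, by
    rw [div_le_one (by exact_mod_cast hM)]; exact_mod_cast ht⟩, ?_⟩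
  congr 1
  rw [← Nat.cast_smul_eq_nsmul ℝ t, smul_smul, div_eq_mul_inv]

lemma segMap_hT {T : Set E} (hM : 0 < M) (hseg : ∀ c ∈ segment ℝ p q, closedBall c r ⊆ T) :
    ∀ t < M, closedBall (p + t • ((M:ℝ)⁻¹ • (q - p))) r ⊆ T := fun t ht =>
  hseg _ (segMap_center_mem hM ht.le)

lemma continuous_segMap : Continuous (segMap p q M r) := continuous_segChain _ _ _ _

lemma segMap_bijective [CompleteSpace E] (hr : 0 < r) (hM : 0 < M)
    (hstep : ‖q - p‖ < M * r) : Function.Bijective (segMap p q M r) :=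
  segChain_bijective _ _ hr (segMap_hv hM hstep) _

lemma segMap_apply_fst (hr : 0 < r) (hM : 0 < M) (hstep : ‖q - p‖ < M * r) :
    segMap p q M r p = q := by
  rw [segMap, segChain_apply_base _ _ hr (segMap_hv hM hstep),
    ← Nat.cast_smul_eq_nsmul ℝ M, smul_smul,
    mul_inv_cancel₀ (by exact_mod_cast hM.ne' : (M:ℝ) ≠ 0), one_smul]
  abel

lemma segMap_dist (hr : 0 < r) (hM : 0 < M) (x : E) :
    ‖segMap p q M r x - x‖ ≤ ‖q - p‖ := by
  have := segChain_dist p ((M:ℝ)⁻¹ • (q - p)) hr M x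
  rw [segMap_norm_v hM] at this
  calc ‖segMap p q M r x - x‖ ≤ M * (‖q - p‖ / M) := this
    _ = ‖q - p‖ := by field_simp

lemma segMap_eq_self {T : Set E} (hr : 0 < r) (hM : 0 < M)
    (hseg : ∀ c ∈ segment ℝ p q, closedBall c r ⊆ T) {x : E} (hx : x ∉ T) :
    segMap p q M r x = x :=
  segChain_eq_self _ _ hr (segMap_hT hM hseg) le_rfl hx

lemma segMap_mapsTo {T : Set E} (hr : 0 < r) (hM : 0 < M) (hstep : ‖q - p‖ < M * r)
    (hseg : ∀ c ∈ segment ℝ p q, closedBall c r ⊆ T) :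
    MapsTo (segMap p q M r) T T :=
  segChain_mapsTo _ _ hr (segMap_hv hM hstep).le (segMap_hT hM hseg) le_rfl

end SegMap


section MoveMap

/-- move `a` to `b` through `m` -/
def moveMap (a m b : E) (M1 M2 : ℕ) (r : ℝ) : E → E :=
  segMap m b M2 r ∘ segMap a m M1 r

variable {a m b : E} {M1 M2 : ℕ} {r : ℝ} {T : Set E}

lemma continuous_moveMap : Continuous (moveMap a m b M1 M2 r) :=
  continuous_segMap.comp continuous_segMap

lemma moveMap_bijective [CompleteSpace E] (hr : 0 < r) (h1 : 0 < M1) (h2 : 0 < M2)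
    (hs1 : ‖m - a‖ < M1 * r) (hs2 : ‖b - m‖ < M2 * r) :
    Function.Bijective (moveMap a m b M1 M2 r) :=
  (segMap_bijective hr h2 hs2).comp (segMap_bijective hr h1 hs1)

lemma moveMap_apply_fst (hr : 0 < r) (h1 : 0 < M1) (h2 : 0 < M2)
    (hs1 : ‖m - a‖ < M1 * r) (hs2 : ‖b - m‖ < M2 * r) :
    moveMap a m b M1 M2 r a = b := by
  unfold moveMap
  simp only [Function.comp_apply]
  rw [segMap_apply_fst hr h1 hs1, segMap_apply_fst hr h2 hs2]

lemma moveMap_eq_self (hr : 0 < r) (h1 : 0 < M1) (h2 : 0 < M2)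
    (hseg1 : ∀ c ∈ segment ℝ a m, closedBall c r ⊆ T)
    (hseg2 : ∀ c ∈ segment ℝ m b, closedBall c r ⊆ T)
    {x : E} (hx : x ∉ T) : moveMap a m b M1 M2 r x = x := by
  unfold moveMap
  simp only [Function.comp_apply]
  rw [segMap_eq_self hr h1 hseg1 hx, segMap_eq_self hr h2 hseg2 hx]

lemma moveMap_mapsTo (hr : 0 < r) (h1 : 0 < M1) (h2 : 0 < M2)
    (hs1 : ‖m - a‖ < M1 * r) (hs2 : ‖b - m‖ < M2 * r)
    (hseg1 : ∀ c ∈ segment ℝ a m, closedBall c r ⊆ T)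
    (hseg2 : ∀ c ∈ segment ℝ m b, closedBall c r ⊆ T) :
    MapsTo (moveMap a m b M1 M2 r) T T :=
  (segMap_mapsTo hr h2 hs2 hseg2).comp (segMap_mapsTo hr h1 hs1 hseg1)

lemma moveMap_dist (hr : 0 < r) (h1 : 0 < M1) (h2 : 0 < M2) (x : E) :
    ‖moveMap a m b M1 M2 r x - x‖ ≤ ‖m - a‖ + ‖b - m‖ := by
  unfold moveMap
  simp only [Function.comp_apply]
  set y := segMap a m M1 r x with hy
  calc ‖segMap m b M2 r y - x‖ ≤ ‖segMap m b M2 r y - y‖ + ‖y - x‖ := by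
        simpa using norm_add_le (segMap m b M2 r y - y) (y - x)
    _ ≤ ‖b - m‖ + ‖m - a‖ := add_le_add (segMap_dist hr h2 y) (segMap_dist hr h1 x)
    _ = ‖m - a‖ + ‖b - m‖ := by ring

end MoveMap

section Fold

variable {R : ℕ → E → E} {T : ℕ → Set E}

/-- iterated composition -/
def foldMap (R : ℕ → E → E) : ℕ → E → E
  | 0 => id
  | (i+1) => R i ∘ foldMap R i

lemma foldMap_continuous (h : ∀ i, Continuous (R i)) (n : ℕ) :
    Continuous (foldMap R n) := by
  induction n with
  | zero => exact continuous_id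
  | succ n ih => exact (h n).comp ih

lemma foldMap_bijective (h : ∀ i, Function.Bijective (R i)) (n : ℕ) :
    Function.Bijective (foldMap R n) := by
  induction n with
  | zero => exact Function.bijective_id
  | succ n ih => exact (h n).comp ih

lemma foldMap_eq_self (hid : ∀ i, ∀ x ∉ T i, R i x = x) (n : ℕ) (x : E)
    (hx : ∀ i < n, x ∉ T i) : foldMap R n x = x := by
  induction n with
  | zero => rfl
  | succ n ih =>
      show R n (foldMap R n x) = x
      rw [ih (fun i hi => hx i (hi.trans (Nat.lt_succ_self n)))]
      exact hid n x (hx n (Nat.lt_succ_self n))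

lemma foldMap_eq_of_mem (hid : ∀ i, ∀ x ∉ T i, R i x = x)
    (hmaps : ∀ i, MapsTo (R i) (T i) (T i))
    (hdisj : ∀ i j, i ≠ j → Disjoint (T i) (T j)) (n : ℕ) :
    ∀ i < n, ∀ x ∈ T i, foldMap R n x = R i x := by
  induction n with
  | zero => intro i hi; omega
  | succ n ih =>
      intro i hi x hx
      show R n (foldMap R n x) = R i x
      rcases Nat.lt_succ_iff_lt_or_eq.mp hi with h | h
      · rw [ih i h x hx]
        have hmem : R i x ∈ T i := hmaps i hx
        have hne : i ≠ n := h.ne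
        exact hid n _ ((hdisj i n hne).subset_compl_right hmem)
      · subst h
        rw [foldMap_eq_self hid i x (fun j hj => (hdisj i j hj.ne').subset_compl_right hx)]

lemma foldMap_mapsTo {C : Set E} (h : ∀ i, MapsTo (R i) C C) (n : ℕ) :
    MapsTo (foldMap R n) C C := by
  induction n with
  | zero => exact mapsTo_id C
  | succ n ih => exact (h n).comp ih

lemma foldMap_eq_self_of_not_mem_cube {C : Set E} (h : ∀ i, ∀ x ∉ C, R i x = x) (n : ℕ) :
    ∀ x ∉ C, foldMap R n x = x := by
  induction n with
  | zero => intro x _; rfl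
  | succ n ih =>
      intro x hx
      show R n (foldMap R n x) = x
      rw [ih x hx]
      exact h n x hx

end Fold


section Geometry

open MeasureTheory

variable {k : ℕ}

/-- the open cube -/
def openCube (k : ℕ) : Set (Fin k → ℝ) := {x | ∀ i, |x i| < 1}

lemma openCube_eq : openCube k = ⋂ i, (fun x : Fin k → ℝ => x i) ⁻¹' (Ioo (-1) 1) := by
  ext x
  simp [openCube, abs_lt, and_comm]

lemma isOpen_openCube : IsOpen (openCube k) := by
  rw [openCube_eq]
  exact isOpen_iInter_of_finite fun i => (isOpen_Ioo).preimage (continuous_apply i)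

lemma convex_openCube : Convex ℝ (openCube k) := by
  rw [openCube_eq]
  exact convex_iInter fun i =>
    (convex_Ioo (-1:ℝ) 1).linear_preimage (LinearMap.proj (R := ℝ) (φ := fun _ : Fin k => ℝ) i)

/-- points x such that the segment from u to x meets the segment [c,d] -/
def badAt (u c d : E) : Set E := {x | (segment ℝ u x ∩ segment ℝ c d).Nonempty}

lemma badAt_subset (u c d : E) (hu : u ∉ segment ℝ c d) :
    badAt u c d ⊆ (fun y => u + y) ''
      ((Submodule.span ℝ {c - u, d - u} : Submodule ℝ E) : Set E) := by
  rintro x ⟨z, hz1, hz2⟩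
  rw [segment_eq_image'] at hz1
  obtain ⟨θ, hθ, hzeq⟩ := hz1
  have hθ0 : θ ≠ 0 := by
    rintro rfl
    simp only [zero_smul, add_zero] at hzeq
    exact hu (hzeq ▸ hz2)
  have hzu : z - u ∈ Submodule.span ℝ ({c - u, d - u} : Set E) := by
    obtain ⟨α, β, hα, hβ, hαβ, habz⟩ := hz2
    have : z - u = α • (c - u) + β • (d - u) := by
      rw [← habz]
      rw [smul_sub, smul_sub]
      rw [show α • c - α • u + (β • d - β • u) = α • c + β • d - (α + β) • u by
        rw [add_smul]; abel]
      rw [hαβ, one_smul]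
    rw [this]
    exact Submodule.add_mem _
      (Submodule.smul_mem _ _ (Submodule.subset_span (by simp)))
      (Submodule.smul_mem _ _ (Submodule.subset_span (by simp)))
  refine ⟨θ⁻¹ • (z - u), Submodule.smul_mem _ _ hzu, ?_⟩
  have : z - u = θ • (x - u) := by rw [← hzeq]; module
  rw [this, smul_smul, inv_mul_cancel₀ hθ0, one_smul]
  module

lemma badAt_null (hk : 3 ≤ k) {u c d : Fin k → ℝ} (hu : u ∉ segment ℝ c d) :
    volume (badAt u c d) = 0 := by
  apply measure_mono_null (badAt_subset u c d hu)
  have himg : (fun y => u + y) ''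
      ((Submodule.span ℝ {c - u, d - u} : Submodule ℝ (Fin k → ℝ)) : Set (Fin k → ℝ)) =
      (fun x => -u + x) ⁻¹'
      ((Submodule.span ℝ {c - u, d - u} : Submodule ℝ (Fin k → ℝ)) : Set (Fin k → ℝ)) := by
    ext x
    constructor
    · rintro ⟨y, hy, rfl⟩; simpa using hy
    · intro hx; exact ⟨-u + x, hx, by module⟩
  rw [himg, measure_preimage_add]
  apply Measure.addHaar_submodule
  intro htop
  have h2 : Module.finrank ℝ
      (Submodule.span ℝ ({c - u, d - u} : Set (Fin k → ℝ))) ≤ 2 := by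
    refine (finrank_span_le_card (R := ℝ) ({c - u, d - u} : Set (Fin k → ℝ))).trans ?_
    rw [Set.toFinset_card]
    calc Fintype.card ({c - u, d - u} : Set (Fin k → ℝ))
        = Nat.card ({c - u, d - u} : Set (Fin k → ℝ)) := (Nat.card_eq_fintype_card).symm
      _ ≤ 2 := by
          have := Set.ncard_insert_le (c - u) ({d - u} : Set (Fin k → ℝ))
          rw [Nat.card_coe_set_eq]
          simpa using this
  rw [htop] at h2
  rw [finrank_top, Module.finrank_fin_fun] at h2
  omega

/-- the union of the two segments from a through m to b -/
def pathSet (a m b : E) : Set E := segment ℝ a m ∪ segment ℝ m b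

end Geometry


section Selection

open MeasureTheory

variable {k : ℕ}

lemma exists_midpoints (hk : 3 ≤ k) (N : ℕ) (a b : ℕ → (Fin k → ℝ)) (ε : ℝ)
    (ha : ∀ i < N, a i ∈ openCube k) (hb : ∀ i < N, b i ∈ openCube k)
    (hab : ∀ i < N, ‖a i - b i‖ < ε)
    (haa : ∀ i < N, ∀ j < N, i ≠ j → a i ≠ a j)
    (hbb : ∀ i < N, ∀ j < N, i ≠ j → b i ≠ b j)
    (hanb : ∀ i < N, ∀ j < N, a i ≠ b j) :
    ∀ n ≤ N, ∃ m : ℕ → (Fin k → ℝ), ∀ i < n,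
      m i ∈ openCube k ∧ (‖m i - a i‖ + ‖b i - m i‖ < ε) ∧
      (∀ j < N, j ≠ i → a j ∉ pathSet (a i) (m i) (b i) ∧ b j ∉ pathSet (a i) (m i) (b i)) ∧
      (∀ j < i, Disjoint (pathSet (a i) (m i) (b i)) (pathSet (a j) (m j) (b j))) := by
  intro n
  induction n with
  | zero => intro _; exact ⟨fun _ => 0, fun i hi => absurd hi (Nat.not_lt_zero i)⟩
  | succ n ih =>
      intro hn1
      have hnN : n < N := Nat.lt_of_succ_le hn1
      obtain ⟨m, hm⟩ := ih (Nat.le_of_succ_le hn1)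
      -- set up the choice of the new midpoint
      have hεn : ‖a n - b n‖ < ε := hab n hnN
      set δ : ℝ := (ε - ‖a n - b n‖) / 4 with hδdef
      have hδ : 0 < δ := by
        have := hab n hnN
        simp only [hδdef]
        linarith
      set mid : Fin k → ℝ := (1/2 : ℝ) • (a n + b n) with hmid
      have hmidcube : mid ∈ openCube k := by
        intro i
        have h1 := ha n hnN i
        have h2 := hb n hnN i
        have : mid i = (a n i + b n i) / 2 := by
          simp [hmid]
          ring
        rw [this]
        rw [abs_lt] at h1 h2 ⊢
        constructor <;> [linarith; linarith]
      -- the bad set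
      set Bad : Set (Fin k → ℝ) := ⋃ (j : ℕ),
        ((⋃ (_ : j < N ∧ j ≠ n),
          (badAt (a n) (a j) (a j) ∪ badAt (b n) (a j) (a j) ∪
           badAt (a n) (b j) (b j) ∪ badAt (b n) (b j) (b j))) ∪
         (⋃ (_ : j < n),
          (badAt (a n) (a j) (m j) ∪ badAt (b n) (a j) (m j) ∪
           badAt (a n) (m j) (b j) ∪ badAt (b n) (m j) (b j)))) with hBad
      have hBadNull : volume Bad = 0 := by
        rw [hBad]
        apply measure_iUnion_null
        intro j
        apply measure_union_null
        · apply measure_iUnion_null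
          rintro ⟨hjN, hjn⟩
          have h1 : a n ∉ segment ℝ (a j) (a j) := by
            rw [segment_same]
            simpa using haa n hnN j hjN (fun h => hjn h.symm)
          have h2 : b n ∉ segment ℝ (a j) (a j) := by
            rw [segment_same]
            simpa using fun h => hanb j hjN n hnN h.symm
          have h3 : a n ∉ segment ℝ (b j) (b j) := by
            rw [segment_same]
            simpa using hanb n hnN j hjN
          have h4 : b n ∉ segment ℝ (b j) (b j) := by
            rw [segment_same]
            simpa using hbb n hnN j hjN (fun h => hjn h.symm)
          exact measure_union_null (measure_union_null
            (measure_union_null (badAt_null hk h1) (badAt_null hk h2))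
            (badAt_null hk h3)) (badAt_null hk h4)
        · apply measure_iUnion_null
          intro hjn
          have hjN : j < N := hjn.trans hnN
          have hpj := (hm j hjn).2.2.1 n hnN (fun h => (Nat.lt_irrefl n) (h ▸ hjn))
          have h1 : a n ∉ segment ℝ (a j) (m j) := fun h => hpj.1 (Or.inl h)
          have h2 : a n ∉ segment ℝ (m j) (b j) := fun h => hpj.1 (Or.inr h)
          have h3 : b n ∉ segment ℝ (a j) (m j) := fun h => hpj.2 (Or.inl h)
          have h4 : b n ∉ segment ℝ (m j) (b j) := fun h => hpj.2 (Or.inr h)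
          exact measure_union_null (measure_union_null
            (measure_union_null (badAt_null hk h1) (badAt_null hk h3))
            (badAt_null hk h2)) (badAt_null hk h4)
      -- pick the new midpoint
      have hGopen : IsOpen (Metric.ball mid δ ∩ openCube k) :=
        Metric.isOpen_ball.inter isOpen_openCube
      have hGne : (Metric.ball mid δ ∩ openCube k).Nonempty :=
        ⟨mid, Metric.mem_ball_self hδ, hmidcube⟩
      have hGpos : 0 < volume (Metric.ball mid δ ∩ openCube k) :=
        hGopen.measure_pos volume hGne
      have hEx : ((Metric.ball mid δ ∩ openCube k) \ Bad).Nonempty := by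
        by_contra hempty
        rw [Set.not_nonempty_iff_eq_empty, Set.diff_eq_empty] at hempty
        exact absurd (measure_mono_null hempty hBadNull) (by exact hGpos.ne')
      obtain ⟨x, ⟨hxball, hxcube⟩, hxBad⟩ := hEx
      have hxnotbad : ∀ (u c d : Fin k → ℝ), x ∈ badAt u c d →
          (badAt u c d ⊆ Bad) → False := fun u c d hx hsub => hxBad (hsub hx)
      refine ⟨Function.update m n x, ?_⟩
      intro i hi
      rcases Nat.lt_succ_iff_lt_or_eq.mp hi with hilt | hieq
      · -- old indices: nothing changed
        have hup : Function.update m n x i = m i :=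
          Function.update_of_ne (by omega) _ _
        have hupj : ∀ j < i, Function.update m n x j = m j := fun j hj =>
          Function.update_of_ne (by omega) _ _
        obtain ⟨p1, p2, p3, p4⟩ := hm i hilt
        refine ⟨by rwa [hup], by rwa [hup], by rwa [hup], ?_⟩
        intro j hj
        rw [hup, hupj j hj]
        exact p4 j hj
      · subst hieq
        -- now the variable i plays the former role of n
        have hup : Function.update m i x i = x := Function.update_self _ _ _
        have hupj : ∀ j < i, Function.update m i x j = m j := fun j hj =>
          Function.update_of_ne (by omega) _ _
        rw [hup]
        have hxm : ‖x - mid‖ < δ := by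
          rw [← dist_eq_norm]
          exact hxball
        have hd1 : ‖mid - a i‖ = ‖a i - b i‖ / 2 := by
          have : mid - a i = (1/2 : ℝ) • (b i - a i) := by
            rw [hmid]; module
          rw [this, norm_smul, norm_sub_rev]
          simp
          ring
        have hd2 : ‖b i - mid‖ = ‖a i - b i‖ / 2 := by
          have : b i - mid = (1/2 : ℝ) • (b i - a i) := by
            rw [hmid]; module
          rw [this, norm_smul, norm_sub_rev]
          simp
          ring
        refine ⟨hxcube, ?_, ?_, ?_⟩
        · -- length bound
          have e1 : ‖x - a i‖ ≤ ‖x - mid‖ + ‖mid - a i‖ := by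
            simpa using norm_add_le (x - mid) (mid - a i)
          have e2 : ‖b i - x‖ ≤ ‖b i - mid‖ + ‖mid - x‖ := by
            simpa using norm_add_le (b i - mid) (mid - x)
          have e3 : ‖mid - x‖ = ‖x - mid‖ := norm_sub_rev _ _
          simp only [hδdef] at hxm
          linarith [e1, e2, hxm, hd1, hd2, e3]
        · -- avoid other marked points
          intro j hjN hjn
          have hsub1 : badAt (a i) (a j) (a j) ⊆ Bad := by
            rw [hBad]
            intro y hy
            refine Set.mem_iUnion.mpr ⟨j, Set.mem_union_left _ ?_⟩
            exact Set.mem_iUnion.mpr ⟨⟨hjN, hjn⟩, by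
              left; left; left; exact hy⟩
          have hsub2 : badAt (b i) (a j) (a j) ⊆ Bad := by
            rw [hBad]
            intro y hy
            refine Set.mem_iUnion.mpr ⟨j, Set.mem_union_left _ ?_⟩
            exact Set.mem_iUnion.mpr ⟨⟨hjN, hjn⟩, by
              left; left; right; exact hy⟩
          have hsub3 : badAt (a i) (b j) (b j) ⊆ Bad := by
            rw [hBad]
            intro y hy
            refine Set.mem_iUnion.mpr ⟨j, Set.mem_union_left _ ?_⟩
            exact Set.mem_iUnion.mpr ⟨⟨hjN, hjn⟩, by
              left; right; exact hy⟩
          have hsub4 : badAt (b i) (b j) (b j) ⊆ Bad := by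
            rw [hBad]
            intro y hy
            refine Set.mem_iUnion.mpr ⟨j, Set.mem_union_left _ ?_⟩
            exact Set.mem_iUnion.mpr ⟨⟨hjN, hjn⟩, by
              right; exact hy⟩
          constructor
          · rintro (h | h)
            · exact hxBad (hsub1 ⟨a j, h, left_mem_segment ℝ _ _⟩)
            · rw [segment_symm] at h
              exact hxBad (hsub2 ⟨a j, h, left_mem_segment ℝ _ _⟩)
          · rintro (h | h)
            · exact hxBad (hsub3 ⟨b j, h, left_mem_segment ℝ _ _⟩)
            · rw [segment_symm] at h
              exact hxBad (hsub4 ⟨b j, h, left_mem_segment ℝ _ _⟩)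
        · -- disjointness from previous paths
          intro j hj
          rw [hupj j hj]
          rw [Set.disjoint_left]
          rintro z hz1 hz2
          have hsub : ∀ (u c d : Fin k → ℝ),
              (badAt u c d ⊆ badAt (a i) (a j) (m j) ∪ badAt (b i) (a j) (m j) ∪
                badAt (a i) (m j) (b j) ∪ badAt (b i) (m j) (b j)) →
              x ∈ badAt u c d → False := by
            intro u c d hsubset hmem
            apply hxBad
            rw [hBad]
            refine Set.mem_iUnion.mpr ⟨j, Set.mem_union_right _ ?_⟩
            exact Set.mem_iUnion.mpr ⟨hj, hsubset hmem⟩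
          rcases hz1 with h1 | h1 <;> rcases hz2 with h2 | h2
          · exact hsub _ _ _ (fun y hy => by left; left; left; exact hy) ⟨z, h1, h2⟩
          · exact hsub _ _ _ (fun y hy => by left; right; exact hy) ⟨z, h1, h2⟩
          · rw [segment_symm] at h1
            exact hsub _ _ _ (fun y hy => by left; left; right; exact hy) ⟨z, h1, h2⟩
          · rw [segment_symm] at h1
            exact hsub _ _ _ (fun y hy => by right; exact hy) ⟨z, h1, h2⟩

end Selection


section MinLemma

lemma exists_pos_forall_le (N : ℕ) (g : ℕ → ℝ) (h : ∀ i < N, 0 < g i) :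
    ∃ r, 0 < r ∧ ∀ i < N, r ≤ g i := by
  induction N with
  | zero => exact ⟨1, one_pos, fun i hi => absurd hi (by omega)⟩
  | succ N ih =>
      obtain ⟨r, hr, hle⟩ := ih (fun i hi => h i (hi.trans N.lt_succ_self))
      refine ⟨min r (g N), lt_min hr (h N N.lt_succ_self), fun i hi => ?_⟩
      rcases Nat.lt_succ_iff_lt_or_eq.mp hi with h' | h'
      · exact (min_le_left _ _).trans (hle i h')
      · subst h'; exact min_le_right _ _

lemma exists_pos_forall_le2 (N : ℕ) (f : ℕ → ℕ → ℝ) (h : ∀ i < N, ∀ j < N, 0 < f i j) :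
    ∃ r, 0 < r ∧ ∀ i < N, ∀ j < N, r ≤ f i j := by
  have hpos : ∀ p < N * N, 0 < f (p / N) (p % N) := by
    intro p hp
    have hN : 0 < N := by
      by_contra h0
      push_neg at h0
      interval_cases N
      omega
    exact h _ (Nat.div_lt_of_lt_mul (by omega)) _ (Nat.mod_lt _ hN)
  obtain ⟨r, hr, hle⟩ := exists_pos_forall_le (N * N) (fun p => f (p / N) (p % N)) hpos
  refine ⟨r, hr, fun i hi j hj => ?_⟩
  have hN : 0 < N := by omega
  have hp : N * i + j < N * N := by
    calc N * i + j < N * i + N := by omega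
      _ = N * (i + 1) := by ring
      _ ≤ N * N := Nat.mul_le_mul_left N (by omega)
  have hdiv : (N * i + j) / N = i := by
    rw [Nat.mul_add_div hN, Nat.div_eq_of_lt hj, add_zero]
  have hmod : (N * i + j) % N = j := by
    rw [Nat.mul_add_mod, Nat.mod_eq_of_lt hj]
  have := hle (N * i + j) hp
  rwa [hdiv, hmod] at this

end MinLemma


section Cube

variable {k : ℕ}

lemma cubeSet_eq : cubeSet k = Set.pi univ (fun _ : Fin k => Icc (-1:ℝ) 1) := by
  ext x
  simp [cubeSet, Set.mem_pi, Pi.le_def, forall_and]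

lemma isCompact_cubeSet : IsCompact (cubeSet k) := by
  rw [cubeSet_eq]
  exact isCompact_univ_pi fun _ => isCompact_Icc

lemma openCube_subset_cubeSet : openCube k ⊆ cubeSet k := by
  intro x h i
  have := abs_lt.mp (h i)
  exact ⟨this.1.le, this.2.le⟩

lemma frontier_not_openCube {x : Fin k → ℝ} (hx : x ∈ frontier (cubeSet k)) :
    x ∉ openCube k := by
  intro hoc
  have hint : x ∈ interior (cubeSet k) :=
    interior_maximal openCube_subset_cubeSet isOpen_openCube hoc
  rw [frontier, mem_diff] at hx
  exact hx.2 hint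

end Cube

/-- Statement `(∗)_k` for `k ≥ 3`: given disjoint finite sets `A, B ⊆ (-1,1)^k`, `ε > 0`,
and a bijection `e : A → B` moving each point less than `ε`, there is a homeomorphism `h` of
`[-1,1]^k` moving every point less than `ε`, extending `e`, and equal to the identity on the
topological boundary of `[-1,1]^k`. -/
theorem star_k_of_three_le (k : ℕ) (hk : 3 ≤ k)
    (A B : Set (Fin k → ℝ)) (hAfin : A.Finite) (hBfin : B.Finite)
    (hAsub : ∀ a ∈ A, ∀ i, |a i| < 1) (hBsub : ∀ b ∈ B, ∀ i, |b i| < 1)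
    (hAB : A ∩ B = ∅) (ε : ℝ) (hε : 0 < ε)
    (e : (Fin k → ℝ) → (Fin k → ℝ)) (he : Set.BijOn e A B)
    (hclose : ∀ a ∈ A, ‖a - e a‖ < ε) :
    ∃ h : ↥(cubeSet k) ≃ₜ ↥(cubeSet k),
      (∀ x : ↥(cubeSet k), ‖x.val - (h x).val‖ < ε) ∧
      (∀ x : ↥(cubeSet k), x.val ∈ A → (h x).val = e x.val) ∧
      (∀ x : ↥(cubeSet k), x.val ∈ frontier (cubeSet k) → h x = x) := by
  classical
  -- enumeration of A
  set s : Finset (Fin k → ℝ) := hAfin.toFinset with hs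
  set N : ℕ := s.card with hN
  set eqv := s.equivFin with heqv
  set a0 : ℕ → (Fin k → ℝ) :=
    fun i => if h : i < N then ((eqv.symm ⟨i, h⟩ : ↥s) : Fin k → ℝ) else 0 with ha0
  have haA : ∀ i < N, a0 i ∈ A := by
    intro i hi
    simp only [ha0, dif_pos hi]
    have h2 := (eqv.symm ⟨i, hi⟩).2
    exact (Set.Finite.mem_toFinset hAfin).mp h2
  have ha0inj : ∀ i < N, ∀ j < N, i ≠ j → a0 i ≠ a0 j := by
    intro i hi j hj hne heq
    simp only [ha0, dif_pos hi, dif_pos hj] at heq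
    have h2 := eqv.symm.injective (Subtype.coe_injective heq)
    exact hne (Fin.mk.injEq i hi j hj ▸ congrArg Fin.val h2)
  have ha0surj : ∀ p ∈ A, ∃ i, i < N ∧ a0 i = p := by
    intro p hp
    have hps : p ∈ s := (Set.Finite.mem_toFinset hAfin).mpr hp
    refine ⟨(eqv ⟨p, hps⟩).val, (eqv ⟨p, hps⟩).isLt, ?_⟩
    simp only [ha0, dif_pos (eqv ⟨p, hps⟩).isLt]
    rw [dif_pos (show ((eqv ⟨p, hps⟩ : Fin s.card) : ℕ) < N from (eqv ⟨p, hps⟩).isLt), Fin.eta,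
      Equiv.symm_apply_apply]
  set b0 : ℕ → (Fin k → ℝ) := fun i => e (a0 i) with hb0
  have hbB : ∀ i < N, b0 i ∈ B := fun i hi => he.mapsTo (haA i hi)
  have hABd : ∀ x, x ∈ A → x ∈ B → False := by
    intro x h1 h2
    have h3 : x ∈ A ∩ B := ⟨h1, h2⟩
    rw [hAB] at h3
    exact h3
  have hb0inj : ∀ i < N, ∀ j < N, i ≠ j → b0 i ≠ b0 j := fun i hi j hj hne heq =>
    ha0inj i hi j hj hne (he.injOn (haA i hi) (haA j hj) heq)
  have hanb : ∀ i < N, ∀ j < N, a0 i ≠ b0 j := fun i hi j hj heq =>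
    hABd _ (haA i hi) (heq ▸ hbB j hj)
  have haoc : ∀ i < N, a0 i ∈ openCube k := fun i hi j => hAsub _ (haA i hi) j
  have hboc : ∀ i < N, b0 i ∈ openCube k := fun i hi j => hBsub _ (hbB i hi) j
  have habl : ∀ i < N, ‖a0 i - b0 i‖ < ε := fun i hi => hclose _ (haA i hi)
  -- midpoints
  obtain ⟨m, hm⟩ :=
    exists_midpoints hk N a0 b0 ε haoc hboc habl ha0inj hb0inj hanb N le_rfl
  set path : ℕ → Set (Fin k → ℝ) := fun i => pathSet (a0 i) (m i) (b0 i) with hpath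
  have hsegco : ∀ p q : Fin k → ℝ, IsCompact (segment ℝ p q) := by
    intro p q
    rw [segment_eq_image]
    exact isCompact_Icc.image
      (((continuous_const.sub continuous_id).smul continuous_const).add
        (continuous_id.smul continuous_const))
  have hpathco : ∀ i, IsCompact (path i) := fun i =>
    (hsegco _ _).union (hsegco _ _)
  have hpathne : ∀ i, (path i).Nonempty := fun i => ⟨a0 i, Or.inl (left_mem_segment ℝ _ _)⟩
  have hpathsub : ∀ i < N, path i ⊆ openCube k := fun i hi =>
    union_subset (convex_openCube.segment_subset (haoc i hi) ((hm i hi).1))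
      (convex_openCube.segment_subset ((hm i hi).1) (hboc i hi))
  have hpathdisj : ∀ i < N, ∀ j < N, i ≠ j → Disjoint (path i) (path j) := by
    intro i hi j hj hij
    rcases Nat.lt_or_ge j i with h | h
    · exact (hm i hi).2.2.2 j h
    · have : i < j := by omega
      exact ((hm j hj).2.2.2 i this).symm
  have hpts : ∀ i < N, ∀ j < N, j ≠ i → a0 j ∉ path i ∧ b0 j ∉ path i := fun i hi j hj hji =>
    (hm i hi).2.2.1 j hj hji
  -- separation radius
  have hex : ∀ i j, ∃ δ, 0 < δ ∧ (i < N → j < N →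
      (if i = j then thickening δ (path i) ⊆ openCube k
       else Disjoint (thickening δ (path i)) (thickening δ (path j)) ∧
            a0 j ∉ thickening δ (path i) ∧ b0 j ∉ thickening δ (path i))) := by
    intro i j
    by_cases hi : i < N
    · by_cases hj : j < N
      · have hnear : ∀ pnt : Fin k → ℝ, pnt ∉ path i →
            ∃ δ, 0 < δ ∧ pnt ∉ thickening δ (path i) := by
          intro pnt hp
          have h0 : 0 < infDist pnt (path i) := by
            rwa [← (hpathco i).isClosed.notMem_iff_infDist_pos (hpathne i)]
          refine ⟨infDist pnt (path i), h0, fun hmem => ?_⟩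
          rw [mem_thickening_iff_infDist_lt (hpathne i)] at hmem
          exact lt_irrefl _ hmem
        by_cases hij : i = j
        · obtain ⟨δ, hδ, hsub⟩ :=
            (hpathco i).exists_thickening_subset_open isOpen_openCube (hpathsub i hi)
          exact ⟨δ, hδ, fun _ _ => by rw [if_pos hij]; exact hsub⟩
        · obtain ⟨δ1, hδ1, hd1⟩ :=
            (hpathdisj i hi j hj hij).exists_thickenings (hpathco i) (hpathco j).isClosed
          obtain ⟨δ2, hδ2, hd2⟩ := hnear (a0 j) (hpts i hi j hj (fun h => hij h.symm)).1
          obtain ⟨δ3, hδ3, hd3⟩ := hnear (b0 j) (hpts i hi j hj (fun h => hij h.symm)).2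
          refine ⟨min δ1 (min δ2 δ3), by positivity, fun _ _ => ?_⟩
          rw [if_neg hij]
          refine ⟨hd1.mono (thickening_mono (min_le_left _ _) _)
            (thickening_mono (min_le_left _ _) _), ?_, ?_⟩
          · exact fun hmem => hd2 (thickening_mono
              ((min_le_right δ1 _).trans (min_le_left _ _)) _ hmem)
          · exact fun hmem => hd3 (thickening_mono
              ((min_le_right δ1 _).trans (min_le_right _ _)) _ hmem)
      · exact ⟨1, one_pos, fun _ h => absurd h hj⟩
    · exact ⟨1, one_pos, fun h => absurd h hi⟩
  choose δf hδfpos hδf using hex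
  obtain ⟨r, hr, hrle⟩ := exists_pos_forall_le2 N (fun i j => δf i j)
    (fun i _ j _ => hδfpos i j)
  have hr2 : 0 < r / 2 := by linarith
  -- tubes
  set T : ℕ → Set (Fin k → ℝ) :=
    fun i => if i < N then thickening r (path i) else ∅ with hT
  have hTsub : ∀ i < N, T i ⊆ openCube k := by
    intro i hi
    rw [hT]
    simp only [if_pos hi]
    have h2 := hδf i i hi hi
    rw [if_pos rfl] at h2
    exact (thickening_mono (hrle i hi i hi) _).trans h2
  have hTcube : ∀ i, T i ⊆ cubeSet k := by
    intro i
    by_cases hi : i < N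
    · exact (hTsub i hi).trans openCube_subset_cubeSet
    · rw [hT]; simp only [if_neg hi]; exact empty_subset _
  have hTdisjoint : ∀ i j, i ≠ j → Disjoint (T i) (T j) := by
    intro i j hij
    by_cases hi : i < N
    · by_cases hj : j < N
      · have h2 := hδf i j hi hj
        rw [if_neg hij] at h2
        rw [hT]
        simp only [if_pos hi, if_pos hj]
        exact h2.1.mono (thickening_mono (hrle i hi j hj) _)
          (thickening_mono (hrle i hi j hj) _)
      · rw [hT]; simp only [if_neg hj]; exact disjoint_empty _
    · rw [hT]; simp only [if_neg hi]; exact empty_disjoint _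
  have hTpt : ∀ i < N, ∀ j < N, j ≠ i → a0 j ∉ T i ∧ b0 j ∉ T i := by
    intro i hi j hj hji
    have h2 := hδf i j hi hj
    rw [if_neg (fun h => hji h.symm)] at h2
    rw [hT]
    simp only [if_pos hi]
    exact ⟨fun hmem => h2.2.1 (thickening_mono (hrle i hi j hj) _ hmem),
      fun hmem => h2.2.2 (thickening_mono (hrle i hi j hj) _ hmem)⟩
  have hTball : ∀ i < N, ∀ c ∈ path i, closedBall c (r/2) ⊆ T i := by
    intro i hi c hc y hy
    rw [hT]
    simp only [if_pos hi]
    rw [mem_thickening_iff_infDist_lt (hpathne i)]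
    calc infDist y (path i) ≤ dist y c := infDist_le_dist_of_mem hc
      _ ≤ r/2 := by rwa [mem_closedBall] at hy
      _ < r := by linarith
  have hTmem : ∀ i < N, a0 i ∈ T i ∧ b0 i ∈ T i := by
    intro i hi
    rw [hT]
    simp only [if_pos hi]
    exact ⟨self_subset_thickening hr _ (Or.inl (left_mem_segment ℝ _ _)),
      self_subset_thickening hr _ (Or.inr (right_mem_segment ℝ _ _))⟩
  -- step counts
  set M1 : ℕ → ℕ := fun i => Nat.ceil (‖m i - a0 i‖ / (r/2)) + 1 with hM1
  set M2 : ℕ → ℕ := fun i => Nat.ceil (‖b0 i - m i‖ / (r/2)) + 1 with hM2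
  have hM1pos : ∀ i, 0 < M1 i := fun i => Nat.succ_pos _
  have hM2pos : ∀ i, 0 < M2 i := fun i => Nat.succ_pos _
  have hstep1 : ∀ i, ‖m i - a0 i‖ < (M1 i) * (r/2) := by
    intro i
    rw [← div_lt_iff₀ hr2]
    calc ‖m i - a0 i‖ / (r/2) ≤ (Nat.ceil (‖m i - a0 i‖ / (r/2)) : ℝ) := Nat.le_ceil _
      _ < M1 i := by rw [hM1]; exact_mod_cast Nat.lt_succ_self _
  have hstep2 : ∀ i, ‖b0 i - m i‖ < (M2 i) * (r/2) := by
    intro i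
    rw [← div_lt_iff₀ hr2]
    calc ‖b0 i - m i‖ / (r/2) ≤ (Nat.ceil (‖b0 i - m i‖ / (r/2)) : ℝ) := Nat.le_ceil _
      _ < M2 i := by rw [hM2]; exact_mod_cast Nat.lt_succ_self _
  -- the round maps
  set R : ℕ → (Fin k → ℝ) → (Fin k → ℝ) :=
    fun i => if i < N then moveMap (a0 i) (m i) (b0 i) (M1 i) (M2 i) (r/2) else id with hR
  have hseg1 : ∀ i < N, ∀ c ∈ segment ℝ (a0 i) (m i), closedBall c (r/2) ⊆ T i :=
    fun i hi c hc => hTball i hi c (Or.inl hc)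
  have hseg2 : ∀ i < N, ∀ c ∈ segment ℝ (m i) (b0 i), closedBall c (r/2) ⊆ T i :=
    fun i hi c hc => hTball i hi c (Or.inr hc)
  have hRcont : ∀ i, Continuous (R i) := by
    intro i
    rw [hR]
    by_cases hi : i < N
    · simp only [if_pos hi]; exact continuous_moveMap
    · simp only [if_neg hi]; exact continuous_id
  have hRbij : ∀ i, Function.Bijective (R i) := by
    intro i
    rw [hR]
    by_cases hi : i < N
    · simp only [if_pos hi]
      exact moveMap_bijective hr2 (hM1pos i) (hM2pos i) (hstep1 i) (hstep2 i)
    · simp only [if_neg hi]; exact Function.bijective_id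
  have hRid : ∀ i, ∀ x ∉ T i, R i x = x := by
    intro i x hx
    rw [hR]
    by_cases hi : i < N
    · simp only [if_pos hi]
      exact moveMap_eq_self hr2 (hM1pos i) (hM2pos i) (hseg1 i hi) (hseg2 i hi) hx
    · simp only [if_neg hi]; rfl
  have hRmaps : ∀ i, MapsTo (R i) (T i) (T i) := by
    intro i
    by_cases hi : i < N
    · rw [hR]
      simp only [if_pos hi]
      exact moveMap_mapsTo hr2 (hM1pos i) (hM2pos i) (hstep1 i) (hstep2 i)
        (hseg1 i hi) (hseg2 i hi)
    · intro x hx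
      rw [hT] at hx
      simp only [if_neg hi] at hx
      exact absurd hx (notMem_empty x)
  have hRcube : ∀ i, MapsTo (R i) (cubeSet k) (cubeSet k) := by
    intro i x hx
    by_cases hxT : x ∈ T i
    · exact hTcube i (hRmaps i hxT)
    · rw [hRid i x hxT]; exact hx
  have hRout : ∀ i, ∀ x ∉ cubeSet k, R i x = x := fun i x hx =>
    hRid i x (fun h => hx (hTcube i h))
  -- the global map
  set H : (Fin k → ℝ) → (Fin k → ℝ) := foldMap R N with hH
  have hHcont : Continuous H := foldMap_continuous hRcont N
  have hHbij : Function.Bijective H := foldMap_bijective hRbij N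
  have hHcube : MapsTo H (cubeSet k) (cubeSet k) := foldMap_mapsTo hRcube N
  have hHout : ∀ x ∉ cubeSet k, H x = x := foldMap_eq_self_of_not_mem_cube hRout N
  have hHmem : ∀ i < N, ∀ x ∈ T i, H x = R i x := foldMap_eq_of_mem hRid hRmaps hTdisjoint N
  have hHdist : ∀ x, ‖H x - x‖ < ε := by
    intro x
    by_cases hx : ∃ i, i < N ∧ x ∈ T i
    · obtain ⟨i, hi, hxi⟩ := hx
      rw [hHmem i hi x hxi]
      have hRi : R i x = moveMap (a0 i) (m i) (b0 i) (M1 i) (M2 i) (r/2) x := by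
        rw [hR]; simp only [if_pos hi]
      rw [hRi]
      calc ‖moveMap (a0 i) (m i) (b0 i) (M1 i) (M2 i) (r/2) x - x‖
          ≤ ‖m i - a0 i‖ + ‖b0 i - m i‖ := moveMap_dist hr2 (hM1pos i) (hM2pos i) x
        _ < ε := (hm i hi).2.1
    · push_neg at hx
      rw [hH, foldMap_eq_self hRid N x (fun i hi => hx i hi)]
      simpa using hε
  have hHa : ∀ i < N, H (a0 i) = b0 i := by
    intro i hi
    rw [hHmem i hi _ (hTmem i hi).1]
    have hRi : R i (a0 i) = moveMap (a0 i) (m i) (b0 i) (M1 i) (M2 i) (r/2) (a0 i) := by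
      rw [hR]; simp only [if_pos hi]
    rw [hRi]
    exact moveMap_apply_fst hr2 (hM1pos i) (hM2pos i) (hstep1 i) (hstep2 i)
  have hHfront : ∀ x ∈ frontier (cubeSet k), H x = x := by
    intro x hx
    refine foldMap_eq_self hRid N x (fun i hi hxi => ?_)
    exact frontier_not_openCube hx (hTsub i hi hxi)
  -- build the homeomorphism
  haveI hcs : CompactSpace ↥(cubeSet k) := isCompact_iff_compactSpace.mp isCompact_cubeSet
  set F : ↥(cubeSet k) → ↥(cubeSet k) := fun x => ⟨H x.val, hHcube x.2⟩ with hF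
  have hFbij : Function.Bijective F := by
    constructor
    · intro x y hxy
      exact Subtype.ext (hHbij.1 (congrArg Subtype.val hxy))
    · intro y
      obtain ⟨x, hxy⟩ := hHbij.2 y.val
      have hxc : x ∈ cubeSet k := by
        by_contra hx
        rw [hHout x hx] at hxy
        exact hx (hxy ▸ y.2)
      exact ⟨⟨x, hxc⟩, Subtype.ext hxy⟩
  have hFcont : Continuous F := (hHcont.comp continuous_subtype_val).subtype_mk _
  have hFcont2 : Continuous ⇑(Equiv.ofBijective F hFbij) := hFcont
  refine ⟨hFcont2.homeoOfEquivCompactToT2, ?_, ?_, ?_⟩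
  · intro x
    have : (Equiv.ofBijective F hFbij x).val = H x.val := rfl
    rw [show ((hFcont2.homeoOfEquivCompactToT2) x).val = H x.val from rfl]
    rw [norm_sub_rev]
    exact hHdist x.val
  · intro x hx
    obtain ⟨i, hi, hai⟩ := ha0surj x.val hx
    rw [show ((hFcont2.homeoOfEquivCompactToT2) x).val = H x.val from rfl]
    rw [← hai, hHa i hi]
  · intro x hx
    exact Subtype.ext (hHfront x.val hx)

end
end

section
/- Let F be a free filter on ℕ and define φ : 𝒫(ℕ×ℕ) → [0,2]^ℕ by φ(x)(m) = Σ_{i ∈ ℕ, (i,m) ∉ x} 2^{-i}. Then for every x ⊆ ℕ×ℕ: the function (1/2)·φ(x) belongs to K_F if and only if for every n ∈ ℕ the section {k : (n,k) ∈ x} belongs to F. Moreover, if x ⊆ y ⊆ ℕ×ℕ then φ(y)(n) ≤ φ(x)(n) for all n. -/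
open Filter Topology Set
open scoped Classical

/-- The map `φ : 𝒫(ℕ×ℕ) → [0,2]^ℕ`, `φ(x)(m) = Σ_{i : (i,m) ∉ x} 2^{-i}`. -/
noncomputable def phi (x : Set (ℕ × ℕ)) (m : ℕ) : ℝ :=
  ∑' i : ℕ, if (i, m) ∈ x then 0 else (1 / 2) ^ i

/-- Membership in `K_F ⊆ Q = [-1,1]^ℕ`, formulated for real-valued sequences: values lie in
`[-1,1]` and the sequence `F`-converges to `0`. -/
def KFfun (F : Filter ℕ) : Set (ℕ → ℝ) :=
  {g | (∀ n, g n ∈ Set.Icc (-1 : ℝ) 1) ∧ ∀ m : ℕ, {n | |g n| < (1 / 2) ^ m} ∈ F}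

lemma phi_term_nonneg (x : Set (ℕ × ℕ)) (m i : ℕ) :
    0 ≤ (if (i, m) ∈ x then 0 else (1 / 2 : ℝ) ^ i) := by
  split_ifs <;> positivity

lemma phi_term_summable (x : Set (ℕ × ℕ)) (m : ℕ) :
    Summable (fun i : ℕ => if (i, m) ∈ x then 0 else (1 / 2 : ℝ) ^ i) := by
  apply Summable.of_nonneg_of_le (phi_term_nonneg x m)
    (fun i => ?_) (summable_geometric_of_lt_one (by norm_num) (by norm_num : (1/2:ℝ) < 1))
  split_ifs <;> [positivity; exact le_refl _]

lemma phi_nonneg (x : Set (ℕ × ℕ)) (m : ℕ) : 0 ≤ phi x m :=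
  tsum_nonneg (phi_term_nonneg x m)

lemma tsum_half : ∑' i : ℕ, (1 / 2 : ℝ) ^ i = 2 := by
  rw [tsum_geometric_of_lt_one (by norm_num) (by norm_num)]; norm_num

lemma phi_le_two (x : Set (ℕ × ℕ)) (m : ℕ) : phi x m ≤ 2 := by
  rw [← tsum_half]
  apply Summable.tsum_le_tsum _ (phi_term_summable x m)
    (summable_geometric_of_lt_one (by norm_num) (by norm_num))
  intro i; split_ifs <;> [positivity; exact le_refl _]

lemma phi_lower (x : Set (ℕ × ℕ)) (n k : ℕ) (h : (n, k) ∉ x) :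
    (1 / 2 : ℝ) ^ n ≤ phi x k := by
  have := Summable.le_tsum (phi_term_summable x k) n (fun i _ => phi_term_nonneg x k i)
  simpa [phi, h] using this

lemma phi_upper (x : Set (ℕ × ℕ)) (m N : ℕ) (h : ∀ i < N, (i, m) ∈ x) :
    phi x m ≤ 2 * (1 / 2 : ℝ) ^ N := by
  have hg : Summable (fun i : ℕ => if i < N then 0 else (1 / 2 : ℝ) ^ i) := by
    apply Summable.of_nonneg_of_le (fun i => by split_ifs <;> positivity)
      (fun i => ?_) (summable_geometric_of_lt_one (by norm_num) (by norm_num : (1/2:ℝ) < 1))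
    split_ifs <;> [positivity; exact le_refl _]
  have h1 : phi x m ≤ ∑' i : ℕ, (if i < N then 0 else (1 / 2 : ℝ) ^ i) := by
    apply Summable.tsum_le_tsum _ (phi_term_summable x m) hg
    intro i
    by_cases hi : i < N
    · simp [hi, h i hi]
    · simp only [hi, if_false]
      split_ifs <;> [positivity; exact le_refl _]
  have h2 : ∑' i : ℕ, (if i < N then 0 else (1 / 2 : ℝ) ^ i) = 2 * (1 / 2 : ℝ) ^ N := by
    have := Summable.sum_add_tsum_nat_add N hg
    have hsum0 : ∑ i ∈ Finset.range N, (if i < N then 0 else (1 / 2 : ℝ) ^ i) = 0 := by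
      apply Finset.sum_eq_zero; intro i hi
      simp [Finset.mem_range.mp hi]
    have htail : ∑' i : ℕ, (if i + N < N then 0 else (1 / 2 : ℝ) ^ (i + N))
        = 2 * (1 / 2 : ℝ) ^ N := by
      have : ∀ i : ℕ, (if i + N < N then 0 else (1 / 2 : ℝ) ^ (i + N))
          = (1 / 2 : ℝ) ^ N * (1 / 2 : ℝ) ^ i := by
        intro i
        have : ¬ (i + N < N) := by omega
        simp [this, pow_add, mul_comm]
      rw [tsum_congr this, tsum_mul_left, tsum_half]; ring
    rw [← this, hsum0, zero_add, htail]
  linarith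

/-- For a free filter `F` on `ℕ`: `(1/2)·φ(x) ∈ K_F` iff every section `{k | (n,k) ∈ x}`
belongs to `F`; moreover `φ` is antitone: `x ⊆ y` implies `φ(y)(n) ≤ φ(x)(n)` for all `n`. -/
theorem phi_properties (F : Filter ℕ) (hproper : F.NeBot) (hfree : F ≤ Filter.cofinite) :
    (∀ x : Set (ℕ × ℕ),
      ((fun n => (1 / 2 : ℝ) * phi x n) ∈ KFfun F ↔ ∀ n : ℕ, {k | (n, k) ∈ x} ∈ F)) ∧
    (∀ x y : Set (ℕ × ℕ), x ⊆ y → ∀ n : ℕ, phi y n ≤ phi x n) := by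
  constructor
  · intro x
    constructor
    · rintro ⟨-, hconv⟩ n
      refine Filter.mem_of_superset (hconv (n + 1)) ?_
      intro k hk
      by_contra hkx
      have h1 : (1 / 2 : ℝ) ^ n ≤ phi x k := phi_lower x n k hkx
      have h2 : |(1 / 2 : ℝ) * phi x k| < (1 / 2) ^ (n + 1) := hk
      rw [abs_of_nonneg (by have := phi_nonneg x k; positivity)] at h2
      have : (1 / 2 : ℝ) ^ (n + 1) ≤ (1 / 2) * phi x k := by
        rw [pow_succ, mul_comm]; nlinarith
      linarith
    · intro hsec
      constructor
      · intro n
        have h0 := phi_nonneg x n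
        have h2 := phi_le_two x n
        constructor <;> simp <;> nlinarith
      · intro m
        have hmem : {k | ∀ i < m + 2, (i, k) ∈ x} ∈ F := by
          have : {k | ∀ i < m + 2, (i, k) ∈ x}
              = ⋂ i ∈ Finset.range (m + 2), {k | (i, k) ∈ x} := by
            ext k; simp [Finset.mem_range]
          rw [this]
          exact (Filter.biInter_finset_mem _).mpr fun i _ => hsec i
        refine Filter.mem_of_superset hmem ?_
        intro k hk
        have hub : phi x k ≤ 2 * (1 / 2 : ℝ) ^ (m + 2) := phi_upper x k (m + 2) hk
        have h0 := phi_nonneg x k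
        simp only [Set.mem_setOf_eq]
        rw [abs_of_nonneg (by positivity)]
        have : (2 : ℝ) * (1 / 2) ^ (m + 2) = (1 / 2) ^ (m + 1) := by ring
        have hlt : (1 / 2 : ℝ) ^ (m + 1) < (1 / 2) ^ m := by
          apply pow_lt_pow_right_of_lt_one₀ <;> norm_num
        nlinarith
  · intro x y hxy n
    apply Summable.tsum_le_tsum _ (phi_term_summable y n) (phi_term_summable x n)
    intro i
    by_cases hi : (i, n) ∈ x
    · simp [hi, hxy hi]
    · simp only [hi, if_false]
      split_ifs <;> [positivity; exact le_refl _]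
end

section
/- Let F be a free filter on ℕ and let κ be a cardinal with ω ≤ κ ≤ 𝔠 (the cardinality of the continuum). Then C_p(X_{F,κ}) is separable. -/
/-!
Modifying a function on `X_{F,κ}` to equal its value at `∞` at every point `(α, n)` with
`n ≥ N` yields a continuous function (the filter is free), and these modifications converge
pointwise to the original function as `N → ∞`. For fixed `N` they form a continuous image of
`ℝ × (κ → ℝᴺ)`, which is separable by the Hewitt–Marczewski–Pondiczery theorem: embed `κ` into
the Cantor space `ℕ → Bool`; finitely many indices are already told apart by finitely many bits.
-/

open Filter Topology Set

/-- The space `X_{F,κ} = (κ × ℕ) ∪ {∞}`: every point of `κ × ℕ` is isolated and the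
neighborhoods of `∞ = none` are the sets `{∞} ∪ ⋃_{α} {α} × A_α` with every `A_α ∈ F`. -/
def XFtop (F : Filter ℕ) (ι : Type*) : TopologicalSpace (Option (ι × ℕ)) where
  IsOpen U := none ∈ U → ∀ α : ι, {n | some (α, n) ∈ U} ∈ F
  isOpen_univ := fun _ _ => Filter.univ_mem
  isOpen_inter := fun U V hU hV hmem α => Filter.inter_mem (hU hmem.1 α) (hV hmem.2 α)
  isOpen_sUnion := fun S hS hmem α => by
    obtain ⟨U, hUS, hU⟩ := hmem
    exact Filter.mem_of_superset (hS U hUS hU α) fun n hn => ⟨U, hUS, hn⟩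

/-- `C_p(X)`: continuous real-valued functions on `X` with the topology of pointwise
convergence (subspace of the product `ℝ^X`). -/
abbrev Cp (X : Type*) [TopologicalSpace X] : Type _ := {f : X → ℝ // Continuous f}

open Cardinal TopologicalSpace

theorem exists_injOn_restrict_fin {s : Set (ℕ → Bool)} (hs : s.Finite) :
    ∃ M : ℕ, InjOn (fun x : ℕ → Bool => fun m : Fin M => x m) s := by
  have hpair : ∀ p ∈ s ×ˢ s, ∀ᶠ M in atTop,
      (fun m : Fin M => p.1 m) = (fun m : Fin M => p.2 m) → p.1 = p.2 := by
    intro p _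
    by_cases hp : p.1 = p.2
    · exact Eventually.of_forall fun _ _ => hp
    obtain ⟨m, hm⟩ := Function.ne_iff.mp hp
    filter_upwards [eventually_gt_atTop m] with M hM heq
    exact absurd (congrFun heq ⟨m, hM⟩) hm
  obtain ⟨M, hM⟩ := ((hs.prod hs).eventually_all.mpr hpair).exists
  exact ⟨M, fun x hx y hy hxy => hM (x, y) ⟨hx, hy⟩ hxy⟩

theorem separableSpace_pi_of_injective {ι Y : Type*} [TopologicalSpace Y] [SeparableSpace Y]
    {e : ι → ℕ → Bool} (he : Function.Injective e) : SeparableSpace (ι → Y) := by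
  rcases isEmpty_or_nonempty ι with _ | _
  · infer_instance
  let key (M : ℕ) (i : ι) : Fin M → Bool := fun m => e i m
  let S : Set (ι → Y) := ⋃ M, range fun h : (Fin M → Bool) → Y => h ∘ key M
  have hS : IsSeparable S := .iUnion fun M => isSeparable_range <|
    continuous_pi fun i => continuous_apply (key M i)
  refine (Dense.isSeparable_iff fun f => mem_closure_iff.mpr fun U hU hfU => ?_).mp hS
  obtain ⟨I, u, hu, hIU⟩ := isOpen_pi_iff.mp hU f hfU
  obtain ⟨M, hM⟩ := exists_injOn_restrict_fin (I.finite_toSet.image e)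
  have hkey : InjOn (key M) I := hM.comp he.injOn (mapsTo_image e _)
  -- `f` is matched on `I` by a function that only sees the first `M` bits of `e i`.
  refine ⟨f ∘ Function.invFunOn (key M) I ∘ key M, hIU fun i hi => ?_,
    mem_iUnion.mpr ⟨M, f ∘ Function.invFunOn (key M) I, rfl⟩⟩
  simpa only [Function.comp_apply, hkey.leftInvOn_invFunOn hi] using (hu i hi).2

theorem separableSpace_pi_of_mk_le_continuum {ι Y : Type*} [TopologicalSpace Y]
    [SeparableSpace Y] (h : #ι ≤ 𝔠) : SeparableSpace (ι → Y) := by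
  have : lift.{0} #ι ≤ lift.{_} #(ℕ → Bool) := by
    simpa [← power_def, two_power_aleph0] using h
  obtain ⟨e⟩ := lift_mk_le'.mp this
  exact separableSpace_pi_of_injective e.injective

namespace XFtop

variable {F : Filter ℕ} {ι Y : Type*}

theorem continuous_of_eventually_eq [TopologicalSpace Y] {f : Option (ι × ℕ) → Y}
    (h : ∀ α, ∀ᶠ n in F, f (some (α, n)) = f none) : @Continuous _ _ (XFtop F ι) _ f := by
  let := XFtop F ι
  refine continuous_def.mpr fun U _ hfU α => ?_
  filter_upwards [h α] with n hn
  show f (some (α, n)) ∈ U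
  rwa [hn]

def extendConst (N : ℕ) (c : Y) (g : ι → Fin N → Y) : Option (ι × ℕ) → Y
  | none => c
  | some (α, n) => if h : n < N then g α ⟨n, h⟩ else c

theorem continuous_extendConst [TopologicalSpace Y] (hF : F ≤ cofinite) (N : ℕ) (c : Y)
    (g : ι → Fin N → Y) : @Continuous _ _ (XFtop F ι) _ (extendConst N c g) := by
  refine continuous_of_eventually_eq fun α => ?_
  have : ∀ᶠ n in F, N ≤ n := hF (Nat.cofinite_eq_atTop ▸ eventually_ge_atTop N)
  filter_upwards [this] with n hn
  simp [extendConst, hn.not_gt]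

theorem continuous_extendConst_uncurry [TopologicalSpace Y] (N : ℕ) :
    Continuous fun p : Y × (ι → Fin N → Y) => extendConst N p.1 p.2 := by
  refine continuous_pi fun x => ?_
  rcases x with _ | ⟨α, n⟩
  · exact continuous_fst
  · by_cases h : n < N
    · simp only [extendConst, dif_pos h]
      fun_prop
    · simpa only [extendConst, dif_neg h] using continuous_fst

theorem tendsto_extendConst [TopologicalSpace Y] (f : Option (ι × ℕ) → Y) :
    Tendsto (fun N => extendConst N (f none) fun α (k : Fin N) => f (some (α, k))) atTop
      (𝓝 f) := by
  refine tendsto_pi_nhds.mpr fun x => tendsto_nhds_of_eventually_eq ?_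
  rcases x with _ | ⟨α, n⟩
  · exact Eventually.of_forall fun _ => rfl
  · filter_upwards [eventually_gt_atTop n] with N hN
    simp [extendConst, hN]

end XFtop

theorem separable_Cp_XF_general (F : Filter ℕ) (hfree : F ≤ Filter.cofinite)
    (ι : Type) (h2 : Cardinal.mk ι ≤ Cardinal.continuum) :
    letI := XFtop F ι
    TopologicalSpace.SeparableSpace (Cp (Option (ι × ℕ))) := by
  let := XFtop F ι
  let Φ (N : ℕ) (p : ℝ × (ι → Fin N → ℝ)) : Cp (Option (ι × ℕ)) :=
    ⟨XFtop.extendConst N p.1 p.2, XFtop.continuous_extendConst hfree N p.1 p.2⟩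
  have hΦ (N : ℕ) : Continuous (Φ N) :=
    (XFtop.continuous_extendConst_uncurry N).subtype_mk _
  have (N : ℕ) : SeparableSpace (ι → Fin N → ℝ) := separableSpace_pi_of_mk_le_continuum h2
  have hsep : IsSeparable (⋃ N, range (Φ N)) := .iUnion fun N => isSeparable_range (hΦ N)
  have hdense : Dense (⋃ N, range (Φ N)) := fun f =>
    mem_closure_of_tendsto (f := fun N => Φ N (f.1 none, fun α k => f.1 (some (α, k))))
      (tendsto_subtype_rng.mpr (XFtop.tendsto_extendConst f.1))
      (Eventually.of_forall fun N => mem_iUnion.mpr ⟨N, _, rfl⟩)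
  exact hdense.isSeparable_iff.mp hsep

/-- For a free filter `F` on `ℕ` and an index set `ι` of infinite cardinality at most the
continuum, the space `C_p(X_{F,ι})` is separable. -/
theorem separable_Cp_XF (F : Filter ℕ) (hproper : F.NeBot) (hfree : F ≤ Filter.cofinite)
    (ι : Type) (h1 : Cardinal.aleph0 ≤ Cardinal.mk ι)
    (h2 : Cardinal.mk ι ≤ Cardinal.continuum) :
    letI := XFtop F ι
    TopologicalSpace.SeparableSpace (Cp (Option (ι × ℕ))) :=
  separable_Cp_XF_general F hfree ι h2
end
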